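/- (Theorem 5.9.) Assume the pair (A, b) is controllable (span{b, Ab, …, A^{n−1}b} = ℝⁿ) and A is invertible. Then the value function V₁(ξ) = inf{‖u‖₁ : u ∈ U(ξ)} is continuous on the reachable set R(T). -/

import Mathlib

open MeasureTheory

noncomputable section

/-- A control: a measurable function with `|u t| ≤ 1` a.e. on `[0, T]`. -/
def IsControl (T : ℝ) (u : ℝ → ℝ) : Prop :=
  Measurable u ∧ ∀ᵐ t ∂(volume.restrict (Set.Icc (0:ℝ) T)), |u t| ≤ 1

/-- `∫₀ᵀ e^{−As} b u(s) ds`, the endpoint map of the system `dx/dt = Ax + bu`. -/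
def steer (n : ℕ) (A : Matrix (Fin n) (Fin n) ℝ) (b : Fin n → ℝ) (T : ℝ) (u : ℝ → ℝ) :
    Fin n → ℝ :=
  ∫ s in Set.Icc (0:ℝ) T, u s • (NormedSpace.exp (-(s • A))).mulVec b

/-- `L¹` norm of a control on `[0, T]`. -/
def L1norm (T : ℝ) (u : ℝ → ℝ) : ℝ := ∫ t in Set.Icc (0:ℝ) T, |u t|

/-- The support of `u`: closure of `{t ∈ [0,T] : u t ≠ 0}`. -/
def sparseSupp (T : ℝ) (u : ℝ → ℝ) : Set ℝ :=
  closure {t ∈ Set.Icc (0:ℝ) T | u t ≠ 0}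

/-- `L⁰` "norm": Lebesgue measure of the support. -/
def L0norm (T : ℝ) (u : ℝ → ℝ) : ℝ := (volume (sparseSupp T u)).toReal

/-- Admissible controls for initial state `ξ`: controls steering `ξ` to `0` at time `T`. -/
def Adm (n : ℕ) (A : Matrix (Fin n) (Fin n) ℝ) (b : Fin n → ℝ) (T : ℝ) (ξ : Fin n → ℝ) :
    Set (ℝ → ℝ) :=
  {u | IsControl T u ∧ ξ = -(steer n A b T u)}

/-- The reachable set `R(T)`. -/
def ReachSet (n : ℕ) (A : Matrix (Fin n) (Fin n) ℝ) (b : Fin n → ℝ) (T : ℝ) :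
    Set (Fin n → ℝ) :=
  {x | ∃ u, IsControl T u ∧ x = steer n A b T u}

/-- The set `R_α`. -/
def Rset (n : ℕ) (A : Matrix (Fin n) (Fin n) ℝ) (b : Fin n → ℝ) (T α : ℝ) :
    Set (Fin n → ℝ) :=
  {x | ∃ u, IsControl T u ∧ L1norm T u ≤ α ∧ x = steer n A b T u}

/-- Value function of the `L¹`-optimal control problem. -/
def V1 (n : ℕ) (A : Matrix (Fin n) (Fin n) ℝ) (b : Fin n → ℝ) (T : ℝ) (ξ : Fin n → ℝ) : ℝ :=
  sInf (L1norm T '' Adm n A b T ξ)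

/-- Value function of the sparse (`L⁰`) optimal control problem. -/
def V0 (n : ℕ) (A : Matrix (Fin n) (Fin n) ℝ) (b : Fin n → ℝ) (T : ℝ) (ξ : Fin n → ℝ) : ℝ :=
  sInf (L0norm T '' Adm n A b T ξ)

/-- Controllability of the pair `(A, b)`: `span {b, Ab, …, A^{n−1} b} = ℝⁿ`. -/
def Controllable (n : ℕ) (A : Matrix (Fin n) (Fin n) ℝ) (b : Fin n → ℝ) : Prop :=
  Submodule.span ℝ (Set.range fun i : Fin n => (A ^ (i : ℕ)).mulVec b) = ⊤


/-!
`V₁` is convex on the convex set `R(T)` (mix near-optimal controls), hence continuous on its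
interior. At a boundary point `V₁` tends to `T`, its largest value. Indeed, by controllability
`t ↦ η ⬝ e^{-tA} b` is a nonzero analytic function for `η ≠ 0`, so it is small only on a set of
small measure, uniformly for `η` on the unit sphere. If `‖u‖₁ ≤ T - δ`, then `|u| ≤ 1 - θ` on a
set `S` of measure at least `δ / 2`, the Gram matrix of `e^{-tA} b` over `S` is uniformly
coercive, and corrections `t ↦ y ⬝ e^{-tA} b` supported on `S` reach a ball of radius `c(δ)`
around the endpoint of `u`. So points of `R(T)` with `V₁ < T - δ` are at distance at least
`c(δ)` from the boundary.
-/

open Matrix Filter Topology Set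
open scoped ENNReal

theorem abs_dotProduct_le {ι : Type*} [Fintype ι] (x y : ι → ℝ) :
    |x ⬝ᵥ y| ≤ Fintype.card ι * (‖x‖ * ‖y‖) := by
  calc |x ⬝ᵥ y| ≤ ∑ i, |x i * y i| := Finset.abs_sum_le_sum_abs _ _
    _ ≤ ∑ _i : ι, ‖x‖ * ‖y‖ := Finset.sum_le_sum fun i _ => by
        rw [abs_mul]
        exact mul_le_mul (norm_le_pi_norm x i) (norm_le_pi_norm y i) (abs_nonneg _) (norm_nonneg _)
    _ = Fintype.card ι * (‖x‖ * ‖y‖) := by simp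

theorem dotProduct_integral {ι X : Type*} [Fintype ι] [MeasurableSpace X] {μ : Measure X}
    {f : X → ι → ℝ} (hf : Integrable f μ) (η : ι → ℝ) :
    η ⬝ᵥ ∫ x, f x ∂μ = ∫ x, η ⬝ᵥ f x ∂μ :=
  ((dotProductBilin ℝ ℝ η).toContinuousLinearMap.integral_comp_comm hf).symm

theorem Matrix.exists_mulVec_eq_of_coercive {ι : Type*} [Fintype ι] [DecidableEq ι]
    {W : Matrix ι ι ℝ} {μ : ℝ} (hμ : 0 < μ) (hW : ∀ η, μ * ‖η‖ ^ 2 ≤ η ⬝ᵥ W *ᵥ η)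
    (x : ι → ℝ) : ∃ y, W *ᵥ y = x ∧ μ * ‖y‖ ≤ Fintype.card ι * ‖x‖ := by
  have hinj : Function.Injective W.mulVecLin := by
    refine (injective_iff_map_eq_zero _).mpr fun y hy => norm_eq_zero.mp ?_
    have := hW y
    rw [mulVecLin_apply] at hy
    rw [hy, dotProduct_zero] at this
    exact (pow_eq_zero_iff two_ne_zero).mp (le_antisymm (by nlinarith) (sq_nonneg _))
  obtain ⟨y, rfl⟩ := (LinearMap.injective_iff_surjective.mp hinj) x
  refine ⟨y, rfl, ?_⟩
  rcases (norm_nonneg y).eq_or_lt with hy | hy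
  · rw [← hy, mul_zero]
    positivity
  · have := (hW y).trans ((le_abs_self _).trans (abs_dotProduct_le y (W *ᵥ y)))
    rw [mulVecLin_apply]
    nlinarith

theorem AnalyticOnNhd.eq_zero_of_volume_ne_zero {E : Type*} [NormedAddCommGroup E]
    [NormedSpace ℝ E] {f : ℝ → E} (hf : AnalyticOnNhd ℝ f univ) {K : Set ℝ} (hK : IsCompact K)
    (h : volume {t ∈ K | f t = 0} ≠ 0) : f = 0 := by
  have hinf : {t ∈ K | f t = 0}.Infinite := fun hfin => h (hfin.measure_zero _)
  obtain ⟨x, -, hx⟩ := hinf.exists_accPt_of_subset_isCompact hK (sep_subset _ _)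
  have hfreq : ∃ᶠ t in 𝓝[≠] x, f t = 0 :=
    (accPt_iff_frequently_nhdsNE.mp hx).mono fun t ht => ht.2
  funext t
  exact hf.eqOn_zero_of_preconnected_of_frequently_eq_zero isPreconnected_univ (mem_univ x)
    hfreq (mem_univ t)

theorem eventually_measure_abs_le_lt {α : Type*} [MeasurableSpace α] {μ : Measure α}
    {g : α → ℝ} (hg : Measurable g) {K : Set α} (hK : MeasurableSet K) (hKfin : μ K ≠ ⊤)
    (h0 : μ {x ∈ K | g x = 0} = 0) {ε : ℝ≥0∞} (hε : 0 < ε) :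
    ∀ᶠ r in 𝓝[>] 0, μ {x ∈ K | |g x| ≤ r} < ε := by
  have hlim := tendsto_measure_biInter_gt (μ := μ) (s := fun r : ℝ => {x ∈ K | |g x| ≤ r})
    (a := 0) (fun r _ => (hK.inter (measurableSet_le hg.abs measurable_const)).nullMeasurableSet)
    (fun r r' _ hrr' x hx => ⟨hx.1, hx.2.trans hrr'⟩)
    ⟨1, one_pos, measure_ne_top_of_subset (sep_subset _ _) hKfin⟩
  have hinter : ⋂ r > (0 : ℝ), {x ∈ K | |g x| ≤ r} = {x ∈ K | g x = 0} := by
    ext x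
    simp only [mem_iInter, mem_ofPred_eq]
    refine ⟨fun h => ⟨(h 1 one_pos).1, abs_nonpos_iff.mp
      (le_of_forall_pos_le_add fun r hr => by simpa using (h r hr).2)⟩, ?_⟩
    rintro ⟨hxK, hx⟩ r hr
    exact ⟨hxK, by simpa [hx] using hr.le⟩
  rw [hinter, h0] at hlim
  exact hlim.eventually (gt_mem_nhds hε)

theorem Controllable.eq_zero_of_dotProduct_pow_mulVec_eq_zero {n : ℕ}
    {A : Matrix (Fin n) (Fin n) ℝ} {b η : Fin n → ℝ} (hctrb : Controllable n A b)
    (h : ∀ k : ℕ, η ⬝ᵥ (A ^ k *ᵥ b) = 0) : η = 0 := by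
  have hspan : Submodule.span ℝ (range fun i : Fin n => A ^ (i : ℕ) *ᵥ b) ≤
      LinearMap.ker (dotProductBilin ℝ ℝ η) :=
    Submodule.span_le.mpr (range_subset_iff.mpr fun i => h i)
  rw [hctrb, top_le_iff] at hspan
  have : η ∈ LinearMap.ker (dotProductBilin ℝ ℝ η) := hspan ▸ Submodule.mem_top
  exact dotProduct_self_eq_zero.mp this

def expNegMulVec {n : ℕ} (A : Matrix (Fin n) (Fin n) ℝ) (b : Fin n → ℝ) (t : ℝ) : Fin n → ℝ :=
  NormedSpace.exp (-(t • A)) *ᵥ b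

section MatrixExp

variable {n : ℕ}

-- `NormedSpace.exp` only depends on the topology, so any normed algebra structure will do.
attribute [local instance] Matrix.linftyOpNormedRing Matrix.linftyOpNormedAlgebra

def dotProductMulVecCLM (η b : Fin n → ℝ) : Matrix (Fin n) (Fin n) ℝ →L[ℝ] ℝ :=
  LinearMap.toContinuousLinearMap
    { toFun := fun M => η ⬝ᵥ M *ᵥ b
      map_add' := fun M N => by simp [add_mulVec, dotProduct_add]
      map_smul' := fun c M => by simp [smul_mulVec, dotProduct_smul] }

theorem analyticOnNhd_dotProduct_exp_smul_mulVec (B : Matrix (Fin n) (Fin n) ℝ)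
    (η b : Fin n → ℝ) :
    AnalyticOnNhd ℝ (fun s : ℝ => η ⬝ᵥ NormedSpace.exp (s • B) *ᵥ b) univ := fun _ _ =>
  (dotProductMulVecCLM η b).analyticAt _ |>.comp (NormedSpace.exp_analytic _)
    |>.comp (analyticAt_id.smul analyticAt_const)

theorem hasDerivAt_dotProduct_exp_smul_mulVec (B : Matrix (Fin n) (Fin n) ℝ) (η b : Fin n → ℝ)
    (t : ℝ) : HasDerivAt (fun s : ℝ => η ⬝ᵥ NormedSpace.exp (s • B) *ᵥ b)
      (η ⬝ᵥ NormedSpace.exp (t • B) *ᵥ (B *ᵥ b)) t := by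
  rw [mulVec_mulVec]
  exact (dotProductMulVecCLM η b).hasFDerivAt.comp_hasDerivAt t
    (hasDerivAt_exp_smul_const (𝕂 := ℝ) B t)

theorem iteratedDeriv_dotProduct_exp_smul_mulVec (B : Matrix (Fin n) (Fin n) ℝ)
    (η b : Fin n → ℝ) (k : ℕ) :
    iteratedDeriv k (fun s : ℝ => η ⬝ᵥ NormedSpace.exp (s • B) *ᵥ b) =
      fun s => η ⬝ᵥ NormedSpace.exp (s • B) *ᵥ (B ^ k *ᵥ b) := by
  induction k generalizing b with
  | zero => simp
  | succ k ih =>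
    rw [iteratedDeriv_succ', funext fun t => (hasDerivAt_dotProduct_exp_smul_mulVec B η b t).deriv,
      ih, pow_succ, ← mulVec_mulVec]

theorem continuous_expNegMulVec (A : Matrix (Fin n) (Fin n) ℝ) (b : Fin n → ℝ) :
    Continuous (expNegMulVec A b) :=
  (NormedSpace.exp_continuous.comp (continuous_id.smul continuous_const).neg).matrix_mulVec
    continuous_const

end MatrixExp

theorem Controllable.volume_dotProduct_expNegMulVec_eq_zero {n : ℕ}
    {A : Matrix (Fin n) (Fin n) ℝ} {b : Fin n → ℝ} (hctrb : Controllable n A b)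
    {η : Fin n → ℝ} (hη : η ≠ 0) (T : ℝ) :
    volume {t ∈ Icc (0 : ℝ) T | η ⬝ᵥ expNegMulVec A b t = 0} = 0 := by
  by_contra h
  simp only [expNegMulVec, ← smul_neg] at h
  have hzero := (analyticOnNhd_dotProduct_exp_smul_mulVec (-A) η b).eq_zero_of_volume_ne_zero
    isCompact_Icc h
  refine hη (hctrb.eq_zero_of_dotProduct_pow_mulVec_eq_zero fun k => ?_)
  have hk := congr_fun (congrArg (iteratedDeriv k) hzero) 0
  rw [iteratedDeriv_dotProduct_exp_smul_mulVec] at hk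
  rcases neg_one_pow_eq_or (Matrix (Fin n) (Fin n) ℝ) k with hs | hs <;>
    simpa [neg_pow A, hs, neg_mulVec] using hk

section Controls

variable {T : ℝ} {u w : ℝ → ℝ}

theorem IsControl.neg (hu : IsControl T u) : IsControl T (-u) :=
  ⟨hu.1.neg, hu.2.mono fun t ht => by simpa using ht⟩

theorem convex_setOf_isControl : Convex ℝ {u | IsControl T u} := by
  intro u hu w hw a c ha hc hac
  refine ⟨(hu.1.const_smul a).add (hw.1.const_smul c), ?_⟩
  filter_upwards [hu.2, hw.2] with t hut hwt
  calc |a * u t + c * w t| ≤ a * |u t| + c * |w t| := by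
        simpa [abs_mul, abs_of_nonneg ha, abs_of_nonneg hc] using abs_add_le (a * u t) (c * w t)
    _ ≤ a * 1 + c * 1 := by gcongr
    _ = 1 := by rw [mul_one, mul_one, hac]

theorem IsControl.add_indicator {θ : ℝ} {g : ℝ → ℝ} (hu : IsControl T u) {S : Set ℝ}
    (hSm : MeasurableSet S) (huS : ∀ t ∈ S, |u t| ≤ 1 - θ) (hg : Measurable g)
    (hgS : ∀ t ∈ S, |g t| ≤ θ) : IsControl T (u + S.indicator g) := by
  refine ⟨hu.1.add (hg.indicator hSm), hu.2.mono fun t ht => ?_⟩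
  by_cases htS : t ∈ S
  · calc |u t + S.indicator g t| ≤ |u t| + |g t| := by
          rw [indicator_of_mem htS]; exact abs_add_le _ _
      _ ≤ 1 := by linarith [huS t htS, hgS t htS]
  · simpa [indicator_of_notMem htS] using ht

theorem IsControl.integrableOn_smul {E : Type*} [NormedAddCommGroup E] [NormedSpace ℝ E]
    (hu : IsControl T u) {e : ℝ → E} (he : Continuous e) :
    IntegrableOn (fun s => u s • e s) (Icc 0 T) :=
  he.integrableOn_Icc.bdd_smul 1 hu.1.aestronglyMeasurable hu.2

theorem IsControl.integrableOn_abs (hu : IsControl T u) :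
    IntegrableOn (fun s => |u s|) (Icc 0 T) :=
  (integrable_const 1).mono' hu.1.abs.aestronglyMeasurable (hu.2.mono fun _ ht => by simpa using ht)

theorem L1norm_nonneg (u : ℝ → ℝ) : 0 ≤ L1norm T u :=
  integral_nonneg fun _ => abs_nonneg _

theorem IsControl.L1norm_le (hT : 0 ≤ T) (hu : IsControl T u) : L1norm T u ≤ T := by
  calc L1norm T u ≤ ∫ _ in Icc 0 T, (1 : ℝ) :=
        integral_mono_ae hu.integrableOn_abs (integrable_const 1) hu.2
    _ = T := by simp [hT]

theorem L1norm_smul_add_smul_le (hu : IsControl T u) (hw : IsControl T w) {a c : ℝ}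
    (ha : 0 ≤ a) (hc : 0 ≤ c) (hac : a + c = 1) :
    L1norm T (a • u + c • w) ≤ a * L1norm T u + c * L1norm T w := by
  have hint := (hu.integrableOn_abs.const_mul a).add (hw.integrableOn_abs.const_mul c)
  calc L1norm T (a • u + c • w) ≤ ∫ t in Icc 0 T, (a * |u t| + c * |w t|) :=
        integral_mono (convex_setOf_isControl hu hw ha hc hac).integrableOn_abs hint fun t => by
          simpa [abs_mul, abs_of_nonneg ha, abs_of_nonneg hc] using abs_add_le (a * u t) (c * w t)
    _ = a * L1norm T u + c * L1norm T w := by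
      rw [integral_add (hu.integrableOn_abs.const_mul a) (hw.integrableOn_abs.const_mul c),
        integral_const_mul, integral_const_mul, L1norm, L1norm]

theorem IsControl.sub_L1norm_div_le_volume_real {a : ℝ} (hT : 0 ≤ T) (hu : IsControl T u)
    (ha : 0 < a) : T - L1norm T u / a ≤ volume.real (Icc 0 T \ {t | a ≤ |u t|}) := by
  have hm : MeasurableSet {t | a ≤ |u t|} := measurableSet_le measurable_const hu.1.abs
  have hmarkov := mul_meas_ge_le_integral_of_nonneg (ae_of_all _ fun t => abs_nonneg (u t))
    hu.integrableOn_abs a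
  rw [measureReal_restrict_apply hm, inter_comm] at hmarkov
  have hsplit := measureReal_inter_add_sdiff (μ := volume) (s := Icc 0 T) hm measure_Icc_lt_top.ne
  rw [Real.volume_real_Icc_of_le hT, sub_zero] at hsplit
  have : volume.real (Icc 0 T ∩ {t | a ≤ |u t|}) ≤ L1norm T u / a := by
    rw [le_div_iff₀ ha, L1norm]; linarith
  linarith

end Controls

section Steering

variable {n : ℕ} {e : ℝ → Fin n → ℝ} {T : ℝ} {S : Set ℝ}

def gramMatrix (e : ℝ → Fin n → ℝ) (S : Set ℝ) : Matrix (Fin n) (Fin n) ℝ :=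
  Matrix.of fun i j => ∫ t in S, e t i * e t j

theorem gramMatrix_mulVec (he : Continuous e) (hS : S ⊆ Icc 0 T) (y : Fin n → ℝ) :
    gramMatrix e S *ᵥ y = ∫ t in S, (y ⬝ᵥ e t) • e t := by
  have hint {f : ℝ → ℝ} (hf : Continuous f) : IntegrableOn f S := hf.integrableOn_Icc.mono_set hS
  ext i
  rw [eval_integral fun j => hint (by fun_prop)]
  simp only [mulVec, dotProduct, gramMatrix, of_apply, Pi.smul_apply, smul_eq_mul, Finset.sum_mul]
  rw [integral_finsetSum _ fun j _ => hint (by fun_prop)]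
  refine Finset.sum_congr rfl fun j _ => ?_
  rw [← integral_mul_const]
  congr 1 with t
  ring

theorem dotProduct_gramMatrix_mulVec (he : Continuous e) (hS : S ⊆ Icc 0 T) (η : Fin n → ℝ) :
    η ⬝ᵥ gramMatrix e S *ᵥ η = ∫ t in S, (η ⬝ᵥ e t) ^ 2 := by
  have hint : IntegrableOn (fun t => (η ⬝ᵥ e t) • e t) S :=
    ((continuous_const.dotProduct he).smul he).integrableOn_Icc.mono_set hS
  rw [gramMatrix_mulVec he hS, dotProduct_integral hint]
  simp only [dotProduct_smul, smul_eq_mul, sq]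

theorem setIntegral_indicator_dotProduct_smul (he : Continuous e) (hS : S ⊆ Icc 0 T)
    (hSm : MeasurableSet S) (y : Fin n → ℝ) :
    ∫ s in Icc 0 T, S.indicator (fun t => y ⬝ᵥ e t) s • e s = gramMatrix e S *ᵥ y := by
  rw [← indicator_smul_left, setIntegral_indicator hSm, inter_eq_self_of_subset_right hS,
    gramMatrix_mulVec he hS]

theorem exists_abs_dotProduct_le (he : Continuous e) (T : ℝ) :
    ∃ C > 0, ∀ η : Fin n → ℝ, ∀ t ∈ Icc 0 T, |η ⬝ᵥ e t| ≤ C * ‖η‖ := by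
  obtain ⟨K, hK⟩ := isCompact_Icc.exists_bound_of_continuousOn he.continuousOn
  refine ⟨n * max K 0 + 1, by positivity, fun η t ht => ?_⟩
  have hKt : ‖e t‖ ≤ max K 0 := (hK t ht).trans (le_max_left _ _)
  calc |η ⬝ᵥ e t| ≤ n * (‖η‖ * ‖e t‖) := by simpa using abs_dotProduct_le η (e t)
    _ ≤ n * (‖η‖ * max K 0) := by gcongr
    _ ≤ (n * max K 0 + 1) * ‖η‖ := by nlinarith [norm_nonneg η]

theorem exists_forall_mem_sphere_volume_abs_dotProduct_le_lt (he : Continuous e)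
    (hnull : ∀ η : Fin n → ℝ, η ≠ 0 → volume {t ∈ Icc 0 T | η ⬝ᵥ e t = 0} = 0)
    {ε : ℝ≥0∞} (hε : 0 < ε) : ∃ r > 0, ∀ η ∈ Metric.sphere (0 : Fin n → ℝ) 1,
      volume {t ∈ Icc 0 T | |η ⬝ᵥ e t| ≤ r} < ε := by
  obtain ⟨C, hC, hCe⟩ := exists_abs_dotProduct_le he T
  refine (isCompact_sphere (0 : Fin n → ℝ) 1).induction_on
    (p := fun s => ∃ r > 0, ∀ η ∈ s, volume {t ∈ Icc 0 T | |η ⬝ᵥ e t| ≤ r} < ε)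
    ⟨1, one_pos, fun _ h => h.elim⟩ (fun s s' hss' ⟨r, hr, h⟩ => ⟨r, hr, fun η hη => h η (hss' hη)⟩)
    ?_ ?_
  · rintro s s' ⟨r, hr, h⟩ ⟨r', hr', h'⟩
    refine ⟨min r r', lt_min hr hr', ?_⟩
    rintro η (hη | hη)
    · refine (measure_mono ?_).trans_lt (h η hη)
      exact fun t ht => ⟨ht.1, ht.2.trans (min_le_left _ _)⟩
    · refine (measure_mono ?_).trans_lt (h' η hη)
      exact fun t ht => ⟨ht.1, ht.2.trans (min_le_right _ _)⟩
  · intro η₀ hη₀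
    have hne : η₀ ≠ 0 := by rintro rfl; simp at hη₀
    obtain ⟨ρ, hρ, hρpos⟩ := ((eventually_measure_abs_le_lt
      (continuous_const.dotProduct he).measurable measurableSet_Icc
      (by simp) (hnull η₀ hne) hε).and self_mem_nhdsWithin).exists
    refine ⟨Metric.ball η₀ (ρ / (2 * C)), mem_nhdsWithin_of_mem_nhds
      (Metric.ball_mem_nhds _ (by positivity)), ρ / 2, by positivity, fun η hη => ?_⟩
    refine (measure_mono ?_).trans_lt hρ
    rintro t ⟨ht, htη⟩
    refine ⟨ht, ?_⟩
    have hclose : |(η₀ - η) ⬝ᵥ e t| ≤ ρ / 2 := by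
      refine (hCe _ t ht).trans ?_
      rw [← dist_eq_norm, dist_comm]
      have := (Metric.mem_ball.mp hη).le
      rw [le_div_iff₀ (by positivity)] at this
      linarith
    calc |η₀ ⬝ᵥ e t| ≤ |η ⬝ᵥ e t| + |(η₀ - η) ⬝ᵥ e t| := by
          simpa [sub_dotProduct] using abs_add_le (η ⬝ᵥ e t) ((η₀ - η) ⬝ᵥ e t)
      _ ≤ ρ := by linarith

theorem exists_forall_volume_abs_dotProduct_le_mul_norm_lt (he : Continuous e)
    (hnull : ∀ η : Fin n → ℝ, η ≠ 0 → volume {t ∈ Icc 0 T | η ⬝ᵥ e t = 0} = 0)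
    {ε : ℝ≥0∞} (hε : 0 < ε) :
    ∃ r > 0, ∀ η : Fin n → ℝ, η ≠ 0 → volume {t ∈ Icc 0 T | |η ⬝ᵥ e t| ≤ r * ‖η‖} < ε := by
  obtain ⟨r, hr, hsphere⟩ := exists_forall_mem_sphere_volume_abs_dotProduct_le_lt he hnull hε
  refine ⟨r, hr, fun η hη => ?_⟩
  have hpos : 0 < ‖η‖ := norm_pos_iff.mpr hη
  convert hsphere (‖η‖⁻¹ • η) (by simp [norm_smul, hpos.ne']) using 2
  ext t
  refine and_congr_right fun _ => ?_
  rw [smul_dotProduct, smul_eq_mul, abs_mul, abs_inv, abs_norm, inv_mul_le_iff₀ hpos, mul_comm]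

theorem le_integral_sq_dotProduct (he : Continuous e) (hS : S ⊆ Icc 0 T)
    (hSm : MeasurableSet S) {r ε : ℝ} (hr : 0 ≤ r)
    (hbad : ∀ η : Fin n → ℝ, η ≠ 0 → volume.real {t ∈ Icc 0 T | |η ⬝ᵥ e t| ≤ r * ‖η‖} ≤ ε)
    (η : Fin n → ℝ) : r ^ 2 * (volume.real S - ε) * ‖η‖ ^ 2 ≤ ∫ t in S, (η ⬝ᵥ e t) ^ 2 := by
  rcases eq_or_ne η 0 with rfl | hη
  · simp
  set B := {t ∈ Icc 0 T | |η ⬝ᵥ e t| ≤ r * ‖η‖}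
  have hg : Continuous fun t => (η ⬝ᵥ e t) ^ 2 := by fun_prop
  have hBm : MeasurableSet B :=
    measurableSet_Icc.inter
      (measurableSet_le (continuous_const.dotProduct he).abs.measurable measurable_const)
  have hSB : volume.real S - ε ≤ volume.real (S \ B) :=
    (sub_le_sub_left (hbad η hη) _).trans
      (le_measureReal_sdiff (measure_ne_top_of_subset (sep_subset _ _) measure_Icc_lt_top.ne))
  calc r ^ 2 * (volume.real S - ε) * ‖η‖ ^ 2 ≤ (r * ‖η‖) ^ 2 * volume.real (S \ B) := by
        rw [mul_pow, mul_right_comm]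
        gcongr
    _ ≤ ∫ t in S \ B, (η ⬝ᵥ e t) ^ 2 := by
      refine setIntegral_ge_of_const_le_real (hSm.diff hBm)
        (measure_ne_top_of_subset (sdiff_subset.trans hS) measure_Icc_lt_top.ne) (fun t ht => ?_)
        (hg.integrableOn_Icc.mono_set (sdiff_subset.trans hS))
      have : r * ‖η‖ < |η ⬝ᵥ e t| := not_le.mp fun h => ht.2 ⟨hS ht.1, h⟩
      rw [← sq_abs (η ⬝ᵥ e t)]
      exact pow_le_pow_left₀ (by positivity) this.le 2
    _ ≤ ∫ t in S, (η ⬝ᵥ e t) ^ 2 :=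
      setIntegral_mono_set (hg.integrableOn_Icc.mono_set hS) (ae_of_all _ fun _ => sq_nonneg _)
        sdiff_subset.eventuallyLE

theorem exists_isControl_setIntegral_eq_of_coercive (he : Continuous e) {u : ℝ → ℝ}
    (hu : IsControl T u) (hS : S ⊆ Icc 0 T) (hSm : MeasurableSet S) {θ μ C : ℝ}
    (huS : ∀ t ∈ S, |u t| ≤ 1 - θ) (hμ : 0 < μ)
    (hcoer : ∀ η, μ * ‖η‖ ^ 2 ≤ η ⬝ᵥ gramMatrix e S *ᵥ η) (hC : 0 ≤ C)
    (hCe : ∀ η : Fin n → ℝ, ∀ t ∈ Icc 0 T, |η ⬝ᵥ e t| ≤ C * ‖η‖) {x : Fin n → ℝ}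
    (hx : n * C * dist x (∫ s in Icc 0 T, u s • e s) ≤ θ * μ) :
    ∃ w, IsControl T w ∧ x = ∫ s in Icc 0 T, w s • e s := by
  obtain ⟨y, hy, hyx⟩ := exists_mulVec_eq_of_coercive hμ hcoer (x - ∫ s in Icc 0 T, u s • e s)
  rw [Fintype.card_fin, ← dist_eq_norm] at hyx
  have hsmall : ∀ t ∈ S, |y ⬝ᵥ e t| ≤ θ := fun t ht => by
    refine (hCe y t (hS ht)).trans (le_of_mul_le_mul_left ?_ hμ)
    calc μ * (C * ‖y‖) = C * (μ * ‖y‖) := by ring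
      _ ≤ C * (n * dist x (∫ s in Icc 0 T, u s • e s)) := by gcongr
      _ ≤ μ * θ := by linarith
  have hvint : IntegrableOn (fun s => S.indicator (fun t => y ⬝ᵥ e t) s • e s) (Icc 0 T) := by
    rw [← indicator_smul_left]
    exact ((continuous_const.dotProduct he).smul he).integrableOn_Icc.indicator hSm
  refine ⟨u + S.indicator fun t => y ⬝ᵥ e t,
    hu.add_indicator hSm huS (continuous_const.dotProduct he).measurable hsmall, ?_⟩
  simp only [Pi.add_apply, add_smul]
  rw [integral_add (hu.integrableOn_smul he) hvint,
    setIntegral_indicator_dotProduct_smul he hS hSm, hy]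
  abel

theorem exists_forall_dist_lt_exists_isControl (he : Continuous e)
    (hnull : ∀ η : Fin n → ℝ, η ≠ 0 → volume {t ∈ Icc 0 T | η ⬝ᵥ e t = 0} = 0)
    (hT : 0 < T) {δ : ℝ} (hδ : 0 < δ) :
    ∃ c > 0, ∀ u, IsControl T u → L1norm T u ≤ T - δ →
      ∀ x, dist x (∫ s in Icc 0 T, u s • e s) < c →
        ∃ w, IsControl T w ∧ x = ∫ s in Icc 0 T, w s • e s := by
  set θ := δ / (2 * T)
  obtain ⟨r, hr, hbad⟩ := exists_forall_volume_abs_dotProduct_le_mul_norm_lt he hnull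
    (ENNReal.ofReal_pos.mpr (by positivity : 0 < δ / 4))
  obtain ⟨C, hC, hCe⟩ := exists_abs_dotProduct_le he T
  set μ := r ^ 2 * (δ / 4)
  have hμ : 0 < μ := by positivity
  refine ⟨θ * μ / (n * C + 1), by positivity, fun u hu hL x hx => ?_⟩
  have hδT : δ ≤ T := by linarith [L1norm_nonneg (T := T) u]
  have hθ1 : θ ≤ 1 / 2 := by
    rw [div_le_iff₀ (by positivity)]
    linarith
  set S := Icc 0 T \ {t | 1 - θ ≤ |u t|}
  have hS : S ⊆ Icc 0 T := sdiff_subset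
  have hSm : MeasurableSet S := measurableSet_Icc.diff (measurableSet_le measurable_const hu.1.abs)
  -- Markov: `{1 - θ ≤ |u|}` has measure at most `(T - δ) / (1 - θ) ≤ T - δ / 2`.
  have hvolS : δ / 2 ≤ volume.real S := by
    refine le_trans ?_ (hu.sub_L1norm_div_le_volume_real hT.le (by linarith : 0 < 1 - θ))
    have hθT : θ * T = δ / 2 := by simp only [θ]; field_simp
    rw [le_sub_comm, div_le_iff₀ (by linarith)]
    nlinarith
  have hcoer : ∀ η, μ * ‖η‖ ^ 2 ≤ η ⬝ᵥ gramMatrix e S *ᵥ η := fun η => by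
    rw [dotProduct_gramMatrix_mulVec he hS]
    refine le_trans ?_ (le_integral_sq_dotProduct he hS hSm hr.le
      (fun η hη => ENNReal.toReal_le_of_le_ofReal (by positivity) (hbad η hη).le) η)
    gcongr
    exact mul_le_mul_of_nonneg_left (by linarith) (sq_nonneg r)
  refine exists_isControl_setIntegral_eq_of_coercive he hu hS hSm
    (fun t ht => (not_le.mp ht.2).le) hμ hcoer hC.le hCe ?_
  have hxc := hx.le
  rw [le_div_iff₀ (by positivity)] at hxc
  nlinarith [dist_nonneg (x := x) (y := ∫ s in Icc 0 T, u s • e s)]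

end Steering

section ValueFunction

variable {n : ℕ} {A : Matrix (Fin n) (Fin n) ℝ} {b : Fin n → ℝ} {T : ℝ} {u w : ℝ → ℝ}
  {ξ : Fin n → ℝ}

theorem steer_eq_setIntegral (u : ℝ → ℝ) :
    steer n A b T u = ∫ s in Icc 0 T, u s • expNegMulVec A b s :=
  rfl

theorem steer_neg (u : ℝ → ℝ) : steer n A b T (-u) = -steer n A b T u := by
  simp only [steer_eq_setIntegral, Pi.neg_apply, neg_smul, integral_neg]

theorem steer_smul_add_smul (hu : IsControl T u) (hw : IsControl T w) (a c : ℝ) :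
    steer n A b T (a • u + c • w) = a • steer n A b T u + c • steer n A b T w := by
  have he := continuous_expNegMulVec A b
  simp only [steer_eq_setIntegral, Pi.add_apply, Pi.smul_apply, smul_eq_mul, add_smul, mul_smul]
  rw [integral_add (by exact (hu.integrableOn_smul he).smul a)
    (by exact (hw.integrableOn_smul he).smul c), integral_smul, integral_smul]

theorem neg_mem_reachSet (hξ : ξ ∈ ReachSet n A b T) : -ξ ∈ ReachSet n A b T := by
  obtain ⟨u, hu, rfl⟩ := hξ
  exact ⟨-u, hu.neg, (steer_neg u).symm⟩

theorem convex_reachSet : Convex ℝ (ReachSet n A b T) := by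
  rintro _ ⟨u, hu, rfl⟩ _ ⟨w, hw, rfl⟩ a c ha hc hac
  exact ⟨a • u + c • w, convex_setOf_isControl hu hw ha hc hac,
    (steer_smul_add_smul hu hw a c).symm⟩

theorem nonempty_adm (hξ : ξ ∈ ReachSet n A b T) : (Adm n A b T ξ).Nonempty := by
  obtain ⟨u, hu, rfl⟩ := hξ
  exact ⟨-u, hu.neg, by rw [steer_neg, neg_neg]⟩

theorem V1_le_L1norm (hu : u ∈ Adm n A b T ξ) : V1 n A b T ξ ≤ L1norm T u :=
  csInf_le ⟨0, by rintro _ ⟨v, -, rfl⟩; exact L1norm_nonneg v⟩ ⟨u, hu, rfl⟩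

theorem exists_mem_adm_L1norm_lt (hξ : ξ ∈ ReachSet n A b T) {r : ℝ} (h : V1 n A b T ξ < r) :
    ∃ u ∈ Adm n A b T ξ, L1norm T u < r := by
  obtain ⟨_, ⟨u, hu, rfl⟩, hlt⟩ := exists_lt_of_csInf_lt ((nonempty_adm hξ).image _) h
  exact ⟨u, hu, hlt⟩

theorem V1_le_T (hT : 0 ≤ T) (hξ : ξ ∈ ReachSet n A b T) : V1 n A b T ξ ≤ T :=
  let ⟨_, hu⟩ := nonempty_adm hξ
  (V1_le_L1norm hu).trans (hu.1.L1norm_le hT)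

theorem convexOn_V1 : ConvexOn ℝ (ReachSet n A b T) (V1 n A b T) := by
  refine ⟨convex_reachSet, fun x hx y hy a c ha hc hac => le_of_forall_pos_le_add fun ε hε => ?_⟩
  obtain ⟨u, hu, hux⟩ := exists_mem_adm_L1norm_lt hx (lt_add_of_pos_right _ hε)
  obtain ⟨w, hw, hwy⟩ := exists_mem_adm_L1norm_lt hy (lt_add_of_pos_right _ hε)
  have hadm : a • u + c • w ∈ Adm n A b T (a • x + c • y) :=
    ⟨convex_setOf_isControl hu.1 hw.1 ha hc hac, by
      rw [steer_smul_add_smul hu.1 hw.1, hu.2, hw.2, smul_neg, smul_neg, neg_add]⟩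
  have hε' : a * ε + c * ε = ε := by rw [← add_mul, hac, one_mul]
  calc V1 n A b T (a • x + c • y) ≤ a * L1norm T u + c * L1norm T w :=
        (V1_le_L1norm hadm).trans (L1norm_smul_add_smul_le hu.1 hw.1 ha hc hac)
    _ ≤ a * (V1 n A b T x + ε) + c * (V1 n A b T y + ε) := by gcongr
    _ = a • V1 n A b T x + c • V1 n A b T y + ε := by simp only [smul_eq_mul]; linarith

end ValueFunction

section Boundary

variable {n : ℕ} {A : Matrix (Fin n) (Fin n) ℝ} {b : Fin n → ℝ} {T : ℝ} {ξ : Fin n → ℝ}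

theorem Controllable.exists_ball_subset_reachSet (hctrb : Controllable n A b) (hT : 0 < T)
    {δ : ℝ} (hδ : 0 < δ) : ∃ c > 0, ∀ u, IsControl T u → L1norm T u ≤ T - δ →
      Metric.ball (steer n A b T u) c ⊆ ReachSet n A b T := by
  obtain ⟨c, hc, h⟩ := exists_forall_dist_lt_exists_isControl (continuous_expNegMulVec A b)
    (fun η hη => hctrb.volume_dotProduct_expNegMulVec_eq_zero hη T) hT hδ
  exact ⟨c, hc, fun u hu hL x hx => h u hu hL x hx⟩

theorem Controllable.eventually_sub_le_V1 (hctrb : Controllable n A b) (hT : 0 < T)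
    (hξ : ξ ∉ interior (ReachSet n A b T)) {δ : ℝ} (hδ : 0 < δ) :
    ∀ᶠ y in 𝓝[ReachSet n A b T] ξ, T - δ ≤ V1 n A b T y := by
  obtain ⟨c, hc, hball⟩ := hctrb.exists_ball_subset_reachSet hT hδ
  filter_upwards [self_mem_nhdsWithin, mem_nhdsWithin_of_mem_nhds (Metric.ball_mem_nhds ξ hc)]
    with y hy hyξ
  by_contra! hlt
  obtain ⟨u, hu, hL⟩ := exists_mem_adm_L1norm_lt hy hlt
  refine hξ (mem_interior.mpr ⟨Metric.ball y c, fun x hx => ?_, Metric.isOpen_ball,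
    Metric.mem_ball_comm.mp hyξ⟩)
  have hnegx : -x ∈ Metric.ball (steer n A b T u) c := by
    rwa [← neg_neg (steer n A b T u), ← hu.2, Metric.mem_ball, dist_neg_neg]
  simpa using neg_mem_reachSet (hball u hu.1 hL.le hnegx)

theorem Controllable.tendsto_V1_of_notMem_interior (hctrb : Controllable n A b) (hT : 0 < T)
    (hξ : ξ ∉ interior (ReachSet n A b T)) :
    Tendsto (V1 n A b T) (𝓝[ReachSet n A b T] ξ) (𝓝 T) := by
  refine tendsto_order.2 ⟨fun a ha => ?_, fun a ha => ?_⟩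
  · filter_upwards [hctrb.eventually_sub_le_V1 hT hξ (by linarith : 0 < (T - a) / 2)] with y hy
    linarith
  · exact eventually_nhdsWithin_of_forall fun y hy => (V1_le_T hT.le hy).trans_lt ha

end Boundary

theorem V1_continuousOn_general (T : ℝ) (hT : 0 < T) (n : ℕ)
    (A : Matrix (Fin n) (Fin n) ℝ) (b : Fin n → ℝ)
    (hctrb : Controllable n A b) :
    ContinuousOn (V1 n A b T) (ReachSet n A b T) := by
  intro ξ hξ
  by_cases hint : ξ ∈ interior (ReachSet n A b T)
  · exact (convexOn_V1.continuousOn_interior.continuousAt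
      (isOpen_interior.mem_nhds hint)).continuousWithinAt
  · have hlim := hctrb.tendsto_V1_of_notMem_interior hT hint
    have hξT : V1 n A b T ξ = T :=
      tendsto_nhds_unique (tendsto_pure_nhds _ ξ) (hlim.mono_left (pure_le_nhdsWithin hξ))
    rwa [ContinuousWithinAt, hξT]

/-- Theorem 5.9: under controllability and invertibility of `A`,
the value function `V₁` is continuous on `R(T)`. -/
theorem V1_continuousOn (T : ℝ) (hT : 0 < T) (n : ℕ) (hn : 1 ≤ n)
    (A : Matrix (Fin n) (Fin n) ℝ) (b : Fin n → ℝ)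
    (hctrb : Controllable n A b) (hA : IsUnit A) :
    ContinuousOn (V1 n A b T) (ReachSet n A b T) :=
  V1_continuousOn_general T hT n A b hctrb

end
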